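/- Let 0 < k < 1 and δ ∈ {1,-1}. Then u(t,x) = c1 + c2·e^{-x} - (1 - e^{-x}/k)·t + (δ/k)·[(k + e^{-x}/2)·x - 3√(k(k - e^{-x})) + (2k + e^{-x})·log(√k + √(k - e^{-x}))] satisfies the PDE u_t + (u_x + u_xx)^2 = 0 for all t and all x > -log k. -/

import Mathlib

/-!
Write `u = (c1 - t) + (c2 + t / k) e^{-x} + (δ / k) F(x)` with `F` the bracket. The operator
`∂ₓ + ∂ₓ²` annihilates constants and `e^{-x}`, and `G = F'` satisfies
`G + G' = √k √(k - e^{-x})`. Hence `u_x + u_xx = (δ / k) √(k (k - e^{-x}))`, whose square is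
`1 - e^{-x} / k = -u_t` because `δ² = 1`.
-/

open Real Filter Topology

theorem deriv_deriv_eq_of_eventually_hasDerivAt {f f' : ℝ → ℝ} {x f'' : ℝ}
    (hf : ∀ᶠ y in 𝓝 x, HasDerivAt f (f' y) y) (hf' : HasDerivAt f' f'' x) :
    deriv (deriv f) x = f'' := by
  have hderiv : deriv f =ᶠ[𝓝 x] f' := hf.mono fun _ hy => hy.deriv
  rw [hderiv.deriv_eq, hf'.deriv]

theorem hasDerivAt_exp_neg (x : ℝ) : HasDerivAt (fun y => exp (-y)) (-exp (-x)) x := by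
  simpa using (hasDerivAt_neg x).exp

section

variable {k x : ℝ}

theorem hasDerivAt_sqrt_sub_exp_neg (hx : exp (-x) < k) :
    HasDerivAt (fun y => √(k - exp (-y))) (exp (-x) / (2 * √(k - exp (-x)))) x := by
  simpa using ((hasDerivAt_exp_neg x).const_sub k).sqrt (sub_pos.2 hx).ne'

theorem hasDerivAt_log_sqrt_add_sqrt_sub_exp_neg (hk : 0 < k) (hx : exp (-x) < k) :
    HasDerivAt (fun y => log (√k + √(k - exp (-y)))) ((√k / √(k - exp (-x)) - 1) / 2) x := by
  have hb : 0 < √(k - exp (-x)) := sqrt_pos.2 (sub_pos.2 hx)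
  have hab : 0 < √k + √(k - exp (-x)) := by positivity
  refine (((hasDerivAt_sqrt_sub_exp_neg hx).const_add √k).log hab.ne').congr_deriv ?_
  have hw : exp (-x) = √k ^ 2 - √(k - exp (-x)) ^ 2 := by
    rw [sq_sqrt hk.le, sq_sqrt (sub_pos.2 hx).le]; ring
  generalize √k = a, √(k - exp (-x)) = b at *
  rw [hw]
  field_simp
  ring

noncomputable def sqrtLogProfile (k y : ℝ) : ℝ :=
  (k + exp (-y) / 2) * y - 3 * √(k * (k - exp (-y)))
    + (2 * k + exp (-y)) * log (√k + √(k - exp (-y)))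

noncomputable def sqrtLogProfileDeriv (k y : ℝ) : ℝ :=
  -(exp (-y) / 2) * y - exp (-y) * log (√k + √(k - exp (-y))) + √k * √(k - exp (-y))

theorem hasDerivAt_sqrtLogProfile (hk : 0 < k) (hx : exp (-x) < k) :
    HasDerivAt (sqrtLogProfile k) (sqrtLogProfileDeriv k x) x := by
  have hsplit : sqrtLogProfile k = fun y => (k + exp (-y) / 2) * y - 3 * (√k * √(k - exp (-y)))
      + (2 * k + exp (-y)) * log (√k + √(k - exp (-y))) :=
    funext fun y => by rw [sqrtLogProfile, sqrt_mul hk.le]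
  rw [hsplit]
  have hlin := ((hasDerivAt_exp_neg x).div_const 2 |>.const_add k).mul (hasDerivAt_id x)
  have hsqrt := ((hasDerivAt_sqrt_sub_exp_neg hx).const_mul √k).const_mul 3
  have hlog := ((hasDerivAt_exp_neg x).const_add (2 * k)).mul
    (hasDerivAt_log_sqrt_add_sqrt_sub_exp_neg hk hx)
  refine ((hlin.sub hsqrt).add hlog).congr_deriv ?_
  have hb : 0 < √(k - exp (-x)) := sqrt_pos.2 (sub_pos.2 hx)
  have hw : exp (-x) = √k ^ 2 - √(k - exp (-x)) ^ 2 := by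
    rw [sq_sqrt hk.le, sq_sqrt (sub_pos.2 hx).le]; ring
  have hk' : k = √k ^ 2 := (sq_sqrt hk.le).symm
  simp only [sqrtLogProfileDeriv, id]
  generalize √k = a, √(k - exp (-x)) = b at *
  rw [hw, hk']
  field_simp
  ring

theorem hasDerivAt_sqrtLogProfileDeriv (hk : 0 < k) (hx : exp (-x) < k) :
    HasDerivAt (sqrtLogProfileDeriv k) (√k * √(k - exp (-x)) - sqrtLogProfileDeriv k x) x := by
  have hlin := ((hasDerivAt_exp_neg x).div_const 2).neg.mul (hasDerivAt_id x)
  have hlog := (hasDerivAt_exp_neg x).mul (hasDerivAt_log_sqrt_add_sqrt_sub_exp_neg hk hx)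
  have hsqrt := (hasDerivAt_sqrt_sub_exp_neg hx).const_mul √k
  refine ((hlin.sub hlog).add hsqrt).congr_deriv ?_
  have hb : 0 < √(k - exp (-x)) := sqrt_pos.2 (sub_pos.2 hx)
  simp only [sqrtLogProfileDeriv, id, Pi.neg_apply]
  field_simp
  ring

theorem deriv_add_deriv_deriv_eq_of_sqrtLogProfile (hk : 0 < k) (hx : exp (-x) < k)
    {f : ℝ → ℝ} {a b c : ℝ} (hf : ∀ y, f y = a + b * exp (-y) + c * sqrtLogProfile k y) :
    deriv f x + deriv (deriv f) x = c * (√k * √(k - exp (-x))) := by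
  obtain rfl : f = fun y => a + b * exp (-y) + c * sqrtLogProfile k y := funext hf
  have hderiv : ∀ y, exp (-y) < k → HasDerivAt (fun y => a + b * exp (-y) + c * sqrtLogProfile k y)
      (-b * exp (-y) + c * sqrtLogProfileDeriv k y) y := fun y hy =>
    ((((hasDerivAt_exp_neg y).const_mul b).const_add a).add
      ((hasDerivAt_sqrtLogProfile hk hy).const_mul c)).congr_deriv (by ring)
  have hderiv2 : HasDerivAt (fun y => -b * exp (-y) + c * sqrtLogProfileDeriv k y)
      (b * exp (-x) + c * (√k * √(k - exp (-x)) - sqrtLogProfileDeriv k x)) x :=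
    (((hasDerivAt_exp_neg x).const_mul (-b)).add
      ((hasDerivAt_sqrtLogProfileDeriv hk hx).const_mul c)).congr_deriv (by ring)
  have hnear : ∀ᶠ y in 𝓝 x, exp (-y) < k :=
    (continuous_exp.comp continuous_neg).continuousAt.eventually_lt continuousAt_const hx
  rw [(hderiv x hx).deriv,
    deriv_deriv_eq_of_eventually_hasDerivAt (hnear.mono hderiv) hderiv2]
  ring

end

theorem stmt7_general (k δ c1 c2 : ℝ)
    (hk : 0 < k)
    (hδ : δ = 1 ∨ δ = -1)
    (u : ℝ → ℝ → ℝ)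
    (hu : ∀ t x : ℝ, u t x = c1 + c2 * Real.exp (-x) - (1 - Real.exp (-x) / k) * t
      + (δ / k) * ((k + Real.exp (-x) / 2) * x - 3 * Real.sqrt (k * (k - Real.exp (-x)))
        + (2 * k + Real.exp (-x)) * Real.log (Real.sqrt k + Real.sqrt (k - Real.exp (-x))))) :
    ∀ t x : ℝ, x > -Real.log k →
      deriv (fun s => u s x) t
      + (deriv (fun y => u t y) x
         + deriv (fun y => deriv (fun z => u t z) y) x) ^ 2 = 0 := by
  intro t x hx
  have hxk : exp (-x) < k := (lt_log_iff_exp_lt hk).1 (neg_lt.1 hx)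
  have htime : HasDerivAt (fun s => u s x) (-(1 - exp (-x) / k)) t := by
    simp only [hu]
    exact ((((hasDerivAt_id t).const_mul (1 - exp (-x) / k)).const_sub _).add_const _).congr_deriv
      (by ring)
  have hspace : ∀ y, u t y = (c1 - t) + (c2 + t / k) * exp (-y) + δ / k * sqrtLogProfile k y :=
    fun y => by rw [hu, sqrtLogProfile]; ring
  have hδ2 : δ ^ 2 = 1 := by rcases hδ with rfl | rfl <;> norm_num
  rw [htime.deriv, deriv_add_deriv_deriv_eq_of_sqrtLogProfile hk hxk hspace, mul_pow, div_pow,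
    mul_pow, sq_sqrt hk.le, sq_sqrt (sub_pos.2 hxk).le, hδ2]
  field_simp
  ring

theorem stmt7 (k δ c1 c2 : ℝ)
    (hk : 0 < k)
    (hk1 : k < 1)
    (hδ : δ = 1 ∨ δ = -1)
    (u : ℝ → ℝ → ℝ)
    (hu : ∀ t x : ℝ, u t x = c1 + c2 * Real.exp (-x) - (1 - Real.exp (-x) / k) * t
      + (δ / k) * ((k + Real.exp (-x) / 2) * x - 3 * Real.sqrt (k * (k - Real.exp (-x)))
        + (2 * k + Real.exp (-x)) * Real.log (Real.sqrt k + Real.sqrt (k - Real.exp (-x))))) :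
    ∀ t x : ℝ, x > -Real.log k →
      deriv (fun s => u s x) t
      + (deriv (fun y => u t y) x
         + deriv (fun y => deriv (fun z => u t z) y) x) ^ 2 = 0 :=
  stmt7_general k δ c1 c2 hk hδ u hu
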